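/- In the star network setting, for every θ ≥ 0 there exists exactly one pair (p̃, λ) with p̃ ∈ ℝ^{1+n_1+⋯+n_J} and λ ∈ ℝ^J satisfying the KKT conditions at θ, and its first component p̃ equals the Euclidean projection p̃_θ of the Vikrey vector v_θ onto the expanded core K. -/

import Mathlib

/-- The star network setting of Abhishek–Hajek. -/
structure StarSetting where
  /-- number of arms -/
  J : ℕ
  hJ : 0 < J
  /-- number of leaf items on arm `j` -/
  n : Fin J → ℕ
  hn : ∀ j, 0 < n j
  /-- winning single-item bids -/
  b : (j : Fin J) → Fin (n j) → ℝ
  /-- losing single-item bids -/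
  bl : (j : Fin J) → Fin (n j) → ℝ
  /-- losing single-item bid for item zero -/
  bl0 : ℝ
  /-- package bids -/
  C : Fin J → ℝ
  h_bid : ∀ j k, bl j k ≤ b j k
  h_pos : ∀ j, ∃ k, bl j k < b j k

namespace StarSetting

/-- Index of items (= winning buyers): `none` is item zero, `some ⟨j,k⟩` is item `(j,k)`. -/
abbrev Idx (S : StarSetting) := Option ((j : Fin S.J) × Fin (S.n j))

variable (S : StarSetting)

noncomputable def Δ (j : Fin S.J) (k : Fin (S.n j)) : ℝ := S.b j k - S.bl j k

noncomputable def Δmax (j : Fin S.J) : ℝ :=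
  Finset.univ.sup' ⟨⟨0, S.hn j⟩, Finset.mem_univ _⟩ (S.Δ j)

noncomputable def v0 : ℝ :=
  max S.bl0 (Finset.univ.sup' ⟨⟨0, S.hJ⟩, Finset.mem_univ _⟩
    fun j => S.C j - ∑ k, S.b j k)

noncomputable def η (j : Fin S.J) : ℝ := S.v0 + (∑ k, S.b j k) - S.C j

/-- The Vikrey price vector `v_θ`. -/
noncomputable def vick (θ : ℝ) : EuclideanSpace ℝ S.Idx :=
  WithLp.toLp 2 fun (i : S.Idx) => Option.elim i S.v0 fun jk => max (S.b jk.1 jk.2 - S.η jk.1 - θ) (S.bl jk.1 jk.2)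

/-- The core region `K_θ`. -/
def coreK (θ : ℝ) : Set (EuclideanSpace ℝ S.Idx) :=
  { p | (∀ j, S.C j ≤ p none + ∑ k, p (some ⟨j, k⟩)) ∧
        (∀ j k, S.bl j k ≤ p (some ⟨j, k⟩) ∧ p (some ⟨j, k⟩) ≤ S.b j k) ∧
        S.v0 ≤ p none ∧ p none ≤ S.v0 + θ }

/-- The expanded core region (IR constraint of buyer zero dropped). -/
def expandedK : Set (EuclideanSpace ℝ S.Idx) :=
  { p | (∀ j, S.C j ≤ p none + ∑ k, p (some ⟨j, k⟩)) ∧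
        (∀ j k, S.bl j k ≤ p (some ⟨j, k⟩) ∧ p (some ⟨j, k⟩) ≤ S.b j k) ∧
        S.v0 ≤ p none }

/-- The KKT conditions at `θ` for the projection onto the expanded core. -/
def KKT (θ : ℝ) (p : EuclideanSpace ℝ S.Idx) (lam : Fin S.J → ℝ) : Prop :=
  (∀ j, 0 ≤ lam j) ∧
  p none = S.v0 + ∑ j, lam j ∧
  (∀ j k, p (some ⟨j, k⟩) = min (S.vick θ (some ⟨j, k⟩) + lam j) (S.b j k)) ∧
  (∀ j, ∑ k, max (min (S.η j + θ) (S.Δ j k) - lam j) 0 ≤ (∑ i, lam i) + S.η j) ∧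
  (∀ j, 0 < lam j → (∑ i, lam i) + S.η j = ∑ k, max (min (S.η j + θ) (S.Δ j k) - lam j) 0)

/-- The seller's revenue for a winner price vector. -/
noncomputable def revenue (p : EuclideanSpace ℝ S.Idx) : ℝ :=
  p none + ∑ j, ∑ k, p (some ⟨j, k⟩)

/-- The minimum revenue core at `θ`. -/
def MRC (θ : ℝ) : Set (EuclideanSpace ℝ S.Idx) :=
  { p | p ∈ S.coreK θ ∧ ∀ q ∈ S.coreK θ, S.revenue p ≤ S.revenue q }

end StarSetting

/-- `q` is a point of `A` nearest to `v` (Euclidean projection of `v` onto `A`). -/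
def IsProjOn {E : Type*} [NormedAddCommGroup E] (A : Set E) (v q : E) : Prop :=
  q ∈ A ∧ ∀ r ∈ A, dist v q ≤ dist v r

/-- `f` is piecewise linear on `[0, ∞)`: there are finitely many breakpoints
`0 = t 0 < t 1 < ⋯ < t m` such that `f` is affine on each `[t i, t (i+1)]` and on `[t m, ∞)`. -/
def PiecewiseLinearOnIci (f : ℝ → ℝ) : Prop :=
  ∃ m : ℕ, ∃ t : Fin (m + 1) → ℝ, t 0 = 0 ∧ StrictMono t ∧
    (∀ i : Fin m, ∃ a c : ℝ, ∀ x ∈ Set.Icc (t i.castSucc) (t i.succ), f x = a * x + c) ∧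
    (∃ a c : ℝ, ∀ x ∈ Set.Ici (t (Fin.last m)), f x = a * x + c)

/-!
The KKT conditions are the first-order conditions for minimising the convex potential
`Ψ(λ) = (∑ λ)² / 2 + ∑ⱼ (ηⱼ λⱼ + ∑ₖ (capⱼₖ - λⱼ)₊² / 2)`, `capⱼₖ = min (ηⱼ + θ) Δⱼₖ`,
over the orthant `λ ≥ 0`: its partial derivative in `λⱼ` is `∑ λ + ηⱼ - discountⱼ λⱼ` with
`discountⱼ x = ∑ₖ (capⱼₖ - x)₊`. As `Ψ ≥ (∑ λ)² / 2` there, a minimiser exists.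

Conversely, a KKT pair `(p, λ)` satisfies the variational inequality `⟪v_θ - p, r - p⟫ ≤ 0`
for `r ∈ K`: on arm `j` the multiplier `λⱼ` pairs with the package constraint, which is tight
when `λⱼ > 0`, and the excess `λⱼ - min λⱼ capⱼₖ` is nonzero only where `pⱼₖ = bⱼₖ`. This
characterises the projection, so `p` is unique, and hence so is `∑ λ = p₀ - v₀`. Finally, if
`λⱼ < λ'ⱼ` then `λ'ⱼ > 0` forces `discountⱼ` to be constant on `[λⱼ, λ'ⱼ]`, so it vanishes at
`λ'ⱼ`, contradicting `discountⱼ λ'ⱼ = ∑ λ' + ηⱼ > 0`.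
-/

open Finset Filter Function Topology Asymptotics

theorem hasDerivAt_posPart_sq_half (x : ℝ) :
    HasDerivAt (fun u : ℝ => max u 0 ^ 2 / 2) (max x 0) x := by
  rw [hasDerivAt_iff_isLittleO]
  refine IsBigO.trans_isLittleO (g := fun u => ‖u - x‖ ^ 2) ?_ (isLittleO_pow_sub_sub x one_lt_two)
  refine IsBigO.of_bound (1 / 2) (Eventually.of_forall fun u => ?_)
  simp only [smul_eq_mul, Real.norm_eq_abs, sq_abs, abs_pow]
  rw [abs_le]
  constructor <;>
  rcases le_total u 0 with hu | hu <;> rcases le_total x 0 with hx | hx <;>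
    simp only [max_eq_left, max_eq_right, hu, hx] <;> nlinarith

theorem hasDerivAt_sum_posPart_sub_sq_half {ι : Type*} [Fintype ι] (c : ι → ℝ) (x : ℝ) :
    HasDerivAt (fun x => ∑ k, max (c k - x) 0 ^ 2 / 2) (-∑ k, max (c k - x) 0) x := by
  rw [← Finset.sum_neg_distrib]
  refine HasDerivAt.fun_sum fun k _ => ?_
  simpa [comp_def] using
    (hasDerivAt_posPart_sq_half (c k - x)).comp x ((hasDerivAt_id x).const_sub (c k))

theorem HasDerivAt.nonneg_of_isMinOn_Ici {g : ℝ → ℝ} {d a : ℝ} (hg : HasDerivAt g d a)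
    (hmin : IsMinOn g (Set.Ici a) a) : 0 ≤ d := by
  have hdir : (1 : ℝ) ∈ posTangentConeAt (Set.Ici a) a := by
    simpa using sub_mem_posTangentConeAt_of_segment_subset
      ((segment_eq_Icc (by linarith : a ≤ a + 1)).trans_subset Set.Icc_subset_Ici_self)
  simpa using hmin.localize.hasFDerivWithinAt_nonneg hg.hasFDerivAt.hasFDerivWithinAt hdir

theorem hasDerivAt_update_sq_sum_add_sum {ι : Type*} [Fintype ι] [DecidableEq ι]
    {F F' : ι → ℝ → ℝ} (hF : ∀ i y, HasDerivAt (F i) (F' i y) y) (x : ι → ℝ) (j : ι) :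
    HasDerivAt (fun t => (∑ i, update x j t i) ^ 2 / 2 + ∑ i, F i (update x j t i))
      (∑ i, x i + F' j (x j)) (x j) := by
  have hu : ∀ i, HasDerivAt (fun t => update x j t i) ((Pi.single j 1 : ι → ℝ) i) (x j) :=
    hasDerivAt_pi.1 (hasDerivAt_update x j (x j))
  have hsum : HasDerivAt (fun t => ∑ i, update x j t i) 1 (x j) := by
    simpa using HasDerivAt.fun_sum (u := univ) fun i _ => hu i
  refine (((hsum.fun_pow 2).div_const 2).fun_add
    (HasDerivAt.fun_sum (u := univ) fun i _ => (hF i _).comp (x j) (hu i))).congr_deriv ?_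
  simp [Pi.single_apply]

theorem IsMinOn.hasDerivAt_update_nonneg {ι : Type*} [DecidableEq ι] {Ψ : (ι → ℝ) → ℝ}
    {a : ι → ℝ} (hmin : IsMinOn Ψ (Set.Ici 0) a) (ha : 0 ≤ a) {j : ι} {d : ℝ}
    (hd : HasDerivAt (fun t => Ψ (update a j t)) d (a j)) : 0 ≤ d ∧ (0 < a j → d = 0) := by
  have hslice : IsMinOn (fun t => Ψ (update a j t)) (Set.Ici 0) (a j) := fun t (ht : 0 ≤ t) => by
    simpa using hmin (le_update_iff.2 ⟨ht, fun i _ => ha i⟩)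
  exact ⟨hd.nonneg_of_isMinOn_Ici (hslice.on_subset (Set.Ici_subset_Ici.2 (ha j))),
    fun hpos => (hslice.isLocalMin (Ici_mem_nhds hpos)).hasDerivAt_eq_zero hd⟩

theorem sum_posPart_sub_eq_zero_of_lt_of_le {ι : Type*} [Fintype ι] {c : ι → ℝ} {a b : ℝ}
    (hab : a < b) (h : ∑ k, max (c k - a) 0 ≤ ∑ k, max (c k - b) 0) :
    ∑ k, max (c k - b) 0 = 0 := by
  by_contra hne
  obtain ⟨k, -, hk⟩ := exists_ne_zero_of_sum_ne_zero hne
  have hkb : b < c k := by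
    by_contra! hle
    exact hk (max_eq_right (by linarith))
  refine h.not_gt (sum_lt_sum (fun i _ => max_le_max (by linarith) le_rfl) ⟨k, mem_univ k, ?_⟩)
  rw [max_eq_left (by linarith), max_eq_left (by linarith)]
  linarith

theorem isProjOn_of_inner_le_zero {F : Type*} [NormedAddCommGroup F] [InnerProductSpace ℝ F]
    {A : Set F} {v q : F} (hq : q ∈ A) (h : ∀ r ∈ A, inner ℝ (v - q) (r - q) ≤ 0) :
    IsProjOn A v q := by
  refine ⟨hq, fun r hr => ?_⟩
  have hexp : ‖v - r‖ ^ 2 = ‖v - q‖ ^ 2 - 2 * inner ℝ (v - q) (r - q) + ‖r - q‖ ^ 2 := by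
    rw [← norm_sub_sq_real, sub_sub_sub_cancel_right]
  have hsq : ‖v - q‖ ^ 2 ≤ ‖v - r‖ ^ 2 := by
    rw [hexp]; linarith [h r hr, sq_nonneg ‖r - q‖]
  rw [dist_eq_norm, dist_eq_norm]
  exact (pow_le_pow_iff_left₀ (norm_nonneg _) (norm_nonneg _) two_ne_zero).1 hsq

theorem eq_of_inner_le_zero {F : Type*} [NormedAddCommGroup F] [InnerProductSpace ℝ F]
    {A : Set F} {v q q' : F} (hq : q ∈ A) (hq' : q' ∈ A)
    (h : ∀ r ∈ A, inner ℝ (v - q) (r - q) ≤ 0) (h' : ∀ r ∈ A, inner ℝ (v - q') (r - q') ≤ 0) :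
    q = q' := by
  have hsq : ‖q' - q‖ ^ 2 ≤ 0 := by
    have hsum : inner ℝ (v - q) (q' - q) + inner ℝ (v - q') (q - q') = ‖q' - q‖ ^ 2 := by
      rw [← neg_sub q' q, inner_neg_right, ← sub_eq_add_neg, ← inner_sub_left,
        sub_sub_sub_cancel_left, real_inner_self_eq_norm_sq]
    linarith [h q' hq', h' q hq]
  rw [eq_comm, ← sub_eq_zero, ← norm_eq_zero]
  nlinarith [norm_nonneg (q' - q)]

theorem tendsto_sum_cocompact_inf_Ici {ι : Type*} [Fintype ι] :
    Tendsto (fun x : ι → ℝ => ∑ i, x i) (cocompact (ι → ℝ) ⊓ 𝓟 (Set.Ici 0)) atTop := by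
  refine tendsto_atTop_mono' _ ?_ (tendsto_norm_cocompact_atTop.mono_left inf_le_left)
  filter_upwards [mem_inf_of_right (mem_principal_self _)] with x (hx : 0 ≤ x)
  exact (pi_norm_le_iff_of_nonneg (sum_nonneg fun i _ => hx i)).2 fun i => by
    simpa [abs_of_nonneg (hx i)] using single_le_sum (fun i _ => hx i) (mem_univ i)

namespace StarSetting

variable (S : StarSetting) (θ : ℝ)

noncomputable def cap (j : Fin S.J) (k : Fin (S.n j)) : ℝ := min (S.η j + θ) (S.Δ j k)

noncomputable def discount (j : Fin S.J) (x : ℝ) : ℝ := ∑ k, max (S.cap θ j k - x) 0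

noncomputable def potential (lam : Fin S.J → ℝ) : ℝ :=
  (∑ j, lam j) ^ 2 / 2 + ∑ j, (S.η j * lam j + ∑ k, max (S.cap θ j k - lam j) 0 ^ 2 / 2)

theorem η_nonneg (j : Fin S.J) : 0 ≤ S.η j := by
  have : S.C j - ∑ k, S.b j k ≤ S.v0 :=
    (le_sup' (fun j => S.C j - ∑ k, S.b j k) (Finset.mem_univ j)).trans (le_max_right _ _)
  rw [η]; linarith

theorem vick_some (j : Fin S.J) (k : Fin (S.n j)) :
    S.vick θ (some ⟨j, k⟩) = S.b j k - S.cap θ j k := by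
  change max (S.b j k - S.η j - θ) (S.bl j k) = S.b j k - min (S.η j + θ) (S.b j k - S.bl j k)
  rw [← max_sub_sub_left, sub_sub_cancel, sub_sub]

theorem min_vick_add (j : Fin S.J) (k : Fin (S.n j)) (x : ℝ) :
    min (S.vick θ (some ⟨j, k⟩) + x) (S.b j k) = S.b j k - max (S.cap θ j k - x) 0 := by
  rw [vick_some]
  rcases le_total (S.cap θ j k) x with h | h
  · rw [max_eq_right (by linarith), min_eq_right (by linarith)]; ring
  · rw [max_eq_left (by linarith), min_eq_left (by linarith)]; ring

theorem inner_eq_sum (x y : EuclideanSpace ℝ S.Idx) :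
    inner ℝ x y = x none * y none + ∑ j, ∑ k, x (some ⟨j, k⟩) * y (some ⟨j, k⟩) := by
  simp [PiLp.inner_apply, Fintype.sum_option, Fintype.sum_sigma, mul_comm]

theorem hasDerivAt_potential_update (lam : Fin S.J → ℝ) (j : Fin S.J) :
    HasDerivAt (fun t => S.potential θ (update lam j t))
      (∑ i, lam i + S.η j - S.discount θ j (lam j)) (lam j) := by
  have hF (i : Fin S.J) (y : ℝ) :
      HasDerivAt (fun y => S.η i * y + ∑ k, max (S.cap θ i k - y) 0 ^ 2 / 2)
        (S.η i - S.discount θ i y) y := by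
    refine (((hasDerivAt_id' y).const_mul (S.η i)).fun_add
      (hasDerivAt_sum_posPart_sub_sq_half _ y)).congr_deriv ?_
    rw [mul_one, discount, sub_eq_add_neg]
  unfold potential
  exact (hasDerivAt_update_sq_sum_add_sum hF lam j).congr_deriv (add_sub_assoc _ _ _).symm

theorem exists_kkt_multiplier : ∃ lam : Fin S.J → ℝ, (∀ j, 0 ≤ lam j) ∧
    (∀ j, S.discount θ j (lam j) ≤ ∑ i, lam i + S.η j) ∧
    (∀ j, 0 < lam j → ∑ i, lam i + S.η j = S.discount θ j (lam j)) := by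
  have hcont : Continuous (S.potential θ) := by unfold potential; fun_prop
  have hcoer : Tendsto (S.potential θ) (cocompact _ ⊓ 𝓟 (Set.Ici 0)) atTop := by
    refine tendsto_atTop_mono' _ ?_ (((tendsto_pow_atTop two_ne_zero).atTop_div_const two_pos).comp
      tendsto_sum_cocompact_inf_Ici)
    filter_upwards [mem_inf_of_right (mem_principal_self _)] with lam (hlam : 0 ≤ lam)
    exact le_add_of_nonneg_right (sum_nonneg fun j _ => add_nonneg
      (mul_nonneg (S.η_nonneg j) (hlam j)) (sum_nonneg fun k _ => by positivity))
  obtain ⟨lam, hlam, hmin⟩ := hcont.continuousOn.exists_isMinOn' isClosed_Ici (Set.mem_Ici.2 le_rfl)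
    (hcoer.eventually_ge_atTop (S.potential θ 0))
  have hfoc j := hmin.hasDerivAt_update_nonneg hlam (S.hasDerivAt_potential_update θ lam j)
  exact ⟨lam, hlam, fun j => sub_nonneg.1 (hfoc j).1, fun j hj => sub_eq_zero.1 ((hfoc j).2 hj)⟩

namespace KKT

variable {S θ} {p : EuclideanSpace ℝ S.Idx} {lam : Fin S.J → ℝ}

theorem nonneg (h : S.KKT θ p lam) (j : Fin S.J) : 0 ≤ lam j := h.1 j

theorem price_none (h : S.KKT θ p lam) : p none = S.v0 + ∑ j, lam j := h.2.1

theorem discount_le (h : S.KKT θ p lam) (j : Fin S.J) :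
    S.discount θ j (lam j) ≤ ∑ i, lam i + S.η j := h.2.2.2.1 j

theorem discount_eq (h : S.KKT θ p lam) {j : Fin S.J} (hj : 0 < lam j) :
    ∑ i, lam i + S.η j = S.discount θ j (lam j) := h.2.2.2.2 j hj

theorem price_some (h : S.KKT θ p lam) (j : Fin S.J) (k : Fin (S.n j)) :
    p (some ⟨j, k⟩) = S.b j k - max (S.cap θ j k - lam j) 0 := by
  rw [h.2.2.1 j k, min_vick_add]

theorem arm_sum (h : S.KKT θ p lam) (j : Fin S.J) :
    p none + ∑ k, p (some ⟨j, k⟩) = S.C j + S.η j + ∑ i, lam i - S.discount θ j (lam j) := by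
  simp only [h.price_none, h.price_some, sum_sub_distrib, discount, η]
  ring

theorem mem_expandedK (h : S.KKT θ p lam) : p ∈ S.expandedK := by
  refine ⟨fun j => ?_, fun j k => ?_, ?_⟩
  · rw [h.arm_sum]; linarith [h.discount_le j]
  · have hcap : S.cap θ j k ≤ S.b j k - S.bl j k := min_le_right _ _
    have hdisc : max (S.cap θ j k - lam j) 0 ≤ S.b j k - S.bl j k :=
      max_le (by linarith [h.nonneg j]) (sub_nonneg.2 (S.h_bid j k))
    rw [h.price_some]
    exact ⟨by linarith, by linarith [le_max_right (S.cap θ j k - lam j) 0]⟩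
  · rw [h.price_none]; linarith [sum_nonneg (s := univ) fun j _ => h.nonneg j]

theorem vick_sub_price_some (h : S.KKT θ p lam) (j : Fin S.J) (k : Fin (S.n j)) :
    S.vick θ (some ⟨j, k⟩) - p (some ⟨j, k⟩) = -min (lam j) (S.cap θ j k) := by
  rw [vick_some, h.price_some]
  rcases le_total (lam j) (S.cap θ j k) with hle | hle
  · rw [min_eq_left hle, max_eq_left (by linarith)]; ring
  · rw [min_eq_right hle, max_eq_right (by linarith)]; ring

theorem arm_inner_le_zero (h : S.KKT θ p lam) {r : EuclideanSpace ℝ S.Idx} (hr : r ∈ S.expandedK)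
    (j : Fin S.J) : -(lam j * (r none - p none))
      - ∑ k, min (lam j) (S.cap θ j k) * (r (some ⟨j, k⟩) - p (some ⟨j, k⟩)) ≤ 0 := by
  have hslack :
      0 ≤ lam j * ((r none + ∑ k, r (some ⟨j, k⟩)) - (p none + ∑ k, p (some ⟨j, k⟩))) := by
    rcases (h.nonneg j).eq_or_lt with h0 | hpos
    · rw [← h0, zero_mul]
    · refine mul_nonneg hpos.le (sub_nonneg.2 ?_)
      rw [h.arm_sum, ← h.discount_eq hpos]
      linarith [hr.1 j]
  have hcapped (k : Fin (S.n j)) :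
      (lam j - min (lam j) (S.cap θ j k)) * (r (some ⟨j, k⟩) - p (some ⟨j, k⟩)) ≤ 0 := by
    rcases le_total (lam j) (S.cap θ j k) with hle | hle
    · simp [min_eq_left hle]
    · refine mul_nonpos_of_nonneg_of_nonpos (by linarith [min_le_left (lam j) (S.cap θ j k)]) ?_
      rw [h.price_some, max_eq_right (by linarith)]
      linarith [(hr.2.1 j k).2]
  calc _ = -(lam j * ((r none + ∑ k, r (some ⟨j, k⟩)) - (p none + ∑ k, p (some ⟨j, k⟩))))
        + ∑ k, (lam j - min (lam j) (S.cap θ j k)) * (r (some ⟨j, k⟩) - p (some ⟨j, k⟩)) := by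
        simp only [sub_mul, sum_sub_distrib, ← mul_sum]
        ring
    _ ≤ 0 := by linarith [sum_nonpos (s := univ) fun k _ => hcapped k]

theorem inner_vick_sub_le_zero (h : S.KKT θ p lam) {r : EuclideanSpace ℝ S.Idx}
    (hr : r ∈ S.expandedK) : inner ℝ (S.vick θ - p) (r - p) ≤ 0 := by
  have hnone : S.vick θ none - p none = -∑ j, lam j := by
    rw [h.price_none]; exact sub_add_cancel_left _ _
  rw [inner_eq_sum]
  simp only [PiLp.sub_apply, h.vick_sub_price_some, hnone]
  calc _ = ∑ j, (-(lam j * (r none - p none))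
        - ∑ k, min (lam j) (S.cap θ j k) * (r (some ⟨j, k⟩) - p (some ⟨j, k⟩))) := by
        simp only [sum_sub_distrib, sum_neg_distrib, sum_mul, neg_mul]
        ring
    _ ≤ 0 := sum_nonpos fun j _ => h.arm_inner_le_zero hr j

theorem le_of_sum_eq {p' : EuclideanSpace ℝ S.Idx} {lam' : Fin S.J → ℝ} (h : S.KKT θ p lam)
    (h' : S.KKT θ p' lam') (hsum : ∑ i, lam i = ∑ i, lam' i) (j : Fin S.J) : lam' j ≤ lam j := by
  by_contra! hlt
  have hpos : 0 < lam' j := (h.nonneg j).trans_lt hlt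
  have hle : S.discount θ j (lam j) ≤ S.discount θ j (lam' j) := by
    linarith [h.discount_le j, h'.discount_eq hpos]
  have hzero : S.discount θ j (lam' j) = 0 := sum_posPart_sub_eq_zero_of_lt_of_le hlt hle
  linarith [h'.discount_eq hpos, single_le_sum (fun i _ => h'.nonneg i) (mem_univ j),
    S.η_nonneg j]

theorem isProjOn (h : S.KKT θ p lam) : IsProjOn S.expandedK (S.vick θ) p :=
  isProjOn_of_inner_le_zero h.mem_expandedK fun _ hr => h.inner_vick_sub_le_zero hr

theorem price_eq {p' : EuclideanSpace ℝ S.Idx} {lam' : Fin S.J → ℝ} (h : S.KKT θ p lam)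
    (h' : S.KKT θ p' lam') : p = p' :=
  eq_of_inner_le_zero h.mem_expandedK h'.mem_expandedK (fun _ hr => h.inner_vick_sub_le_zero hr)
    fun _ hr => h'.inner_vick_sub_le_zero hr

theorem multiplier_eq {p' : EuclideanSpace ℝ S.Idx} {lam' : Fin S.J → ℝ} (h : S.KKT θ p lam)
    (h' : S.KKT θ p' lam') : lam = lam' := by
  have hsum : ∑ i, lam i = ∑ i, lam' i := by
    simpa [h.price_none, h'.price_none] using congrArg (· none) (h.price_eq h')
  funext j
  exact le_antisymm (h'.le_of_sum_eq h hsum.symm j) (h.le_of_sum_eq h' hsum j)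

end KKT

end StarSetting

theorem kkt_unique_and_proj_general (S : StarSetting) (θ : ℝ) :
    (∃! pl : EuclideanSpace ℝ S.Idx × (Fin S.J → ℝ), S.KKT θ pl.1 pl.2) ∧
    ∀ (p : EuclideanSpace ℝ S.Idx) (lam : Fin S.J → ℝ),
      S.KKT θ p lam → IsProjOn S.expandedK (S.vick θ) p := by
  obtain ⟨lam, hlam, hle, heq⟩ := S.exists_kkt_multiplier θ
  let p : EuclideanSpace ℝ S.Idx := WithLp.toLp 2 fun i => Option.elim i (S.v0 + ∑ j, lam j)
    fun jk => min (S.vick θ (some jk) + lam jk.1) (S.b jk.1 jk.2)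
  have hp : S.KKT θ p lam := ⟨hlam, rfl, fun _ _ => rfl, hle, heq⟩
  exact ⟨⟨(p, lam), hp, fun _ h' => Prod.ext (h'.price_eq hp) (h'.multiplier_eq hp)⟩,
    fun _ _ h => h.isProjOn⟩

/-- for every `θ ≥ 0` there is exactly one pair `(p̃, λ)` satisfying the KKT
conditions at `θ`, and its first component is the projection of `v_θ` onto the
expanded core. -/
theorem kkt_unique_and_proj (S : StarSetting) (θ : ℝ) (hθ : 0 ≤ θ) :
    (∃! pl : EuclideanSpace ℝ S.Idx × (Fin S.J → ℝ), S.KKT θ pl.1 pl.2) ∧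
    ∀ (p : EuclideanSpace ℝ S.Idx) (lam : Fin S.J → ℝ),
      S.KKT θ p lam → IsProjOn S.expandedK (S.vick θ) p :=
  kkt_unique_and_proj_general S θ
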